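/- Let β > 1 be the root of x² − px − 1 with integer p ≥ 1, let m ∈ ℕ with m > ⌊β⌋ = p, and let Ω = ( −mβ/(β² − 1), mβ²/(β² − 1) ). Set 𝒮 = { z ∈ ℤ + ℤβ : 0 < z < m and z′ ∈ Ω }. Then 𝒮 is finite, and for every z > 0 with z ∈ Σ_β(Ω) and z ∉ X^m(β) there exist j ∈ ℕ and s ∈ 𝒮 such that z = m ∑_{i=0}^{j−1} β^{2i} + s β^{2j} or z = m ∑_{i=0}^{j−1} β^{2i+1} + s β^{2j+1}. -/

import Mathlib

/-- The spectrum `X^m(β)`: sums `∑_{j=0}^n a_j β^j` with digits `a_j ∈ {0,1,…,m}`. -/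
def Xspec (β : ℝ) (m : ℕ) : Set ℝ :=
  {x | ∃ (n : ℕ) (c : ℕ → ℕ), (∀ j ≤ n, c j ≤ m) ∧
    x = ∑ j ∈ Finset.range (n + 1), (c j : ℝ) * β ^ j}

/-- The cut-and-project set `Σ_β(Ω) = { x ∈ ℤ + ℤβ : x′ ∈ Ω }`, where `x′ = a + bβ′`
for `x = a + bβ`. -/
def sigmaCP (β β' : ℝ) (Ω : Set ℝ) : Set ℝ :=
  {x | ∃ a b : ℤ, x = (a : ℝ) + (b : ℝ) * β ∧ (a : ℝ) + (b : ℝ) * β' ∈ Ω}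

/-!
Write `z'` for the conjugate and `T_c z = (z - c) / β`, so that `z = c + β T_c z` and
`(T_c z)' = β (c - z')`. The window `[-1, β]` is stable under `T_c` for a suitable digit
`c ≤ p`, and `T_c` strictly decreases `z ≥ 0` inside a set of points of `ℤ[β]` with bounded
`z` and `z'`, which is finite; hence every `z ≥ 0` with `z' ∈ [-1, β]` lies in `X^m(β)`, and
one more digit covers `z ≥ m` with `z' ∈ [-1, m]`.

Now take `z > 0` in `Σ_β(Ω) \ X^m(β)`. If `z' < 0`, then `T_0 z` is again such a point, with
`(T_0 z)' ≥ 0`; if `z' ≥ 0` and `z ≥ m`, then `z' > m` by the above, and `T_m z` is such a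
point with `(T_m z)' < 0`. The window `Ω` is exactly the interval stable under both moves.
By induction on `z`, such points with `z' < 0` have the odd form and those with `z' ≥ 0` the
even form, the induction stopping at a seed `s ∈ 𝒮` once `z < m`.
-/

open Set

theorem Set.induction_of_finite_inter_Iic {α : Type*} [Preorder α] {S : Set α}
    (hS : ∀ A, (S ∩ Iic A).Finite) {P : α → Prop}
    (step : ∀ z ∈ S, (∀ w ∈ S, w < z → P w) → P z) {z : α} (hz : z ∈ S) : P z :=
  (hS z).wellFoundedOn.induction (r := (· < ·)) ⟨hz, le_rfl⟩ fun y hy IH =>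
    step y hy.1 fun w hw hwy => IH w ⟨hw, hwy.le.trans hy.2⟩ hwy

theorem Int.finite_setOf_abs_cast_le (C : ℝ) : {n : ℤ | |(n : ℝ)| ≤ C}.Finite := by
  refine (finite_Icc (-⌈C⌉) ⌈C⌉).subset fun n hn => ?_
  have h := abs_le.1 (hn.trans (Int.le_ceil C))
  exact ⟨by exact_mod_cast h.1, by exact_mod_cast h.2⟩

def IsGaloisConj (β β' z z' : ℝ) : Prop :=
  ∃ a b : ℤ, z = a + b * β ∧ z' = a + b * β'

theorem mem_sigmaCP_iff {β β' z : ℝ} {Ω : Set ℝ} :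
    z ∈ sigmaCP β β' Ω ↔ ∃ z', IsGaloisConj β β' z z' ∧ z' ∈ Ω := by
  constructor
  · rintro ⟨a, b, rfl, h⟩
    exact ⟨_, ⟨a, b, rfl, rfl⟩, h⟩
  · rintro ⟨_, ⟨a, b, rfl, rfl⟩, h⟩
    exact ⟨a, b, rfl, h⟩

theorem finite_setOf_isGaloisConj {β β' : ℝ} (hββ' : β ≠ β') {U V : Set ℝ}
    (hU : Bornology.IsBounded U) (hV : Bornology.IsBounded V) :
    {z | ∃ z', IsGaloisConj β β' z z' ∧ z ∈ U ∧ z' ∈ V}.Finite := by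
  obtain ⟨A, hA⟩ := isBounded_iff_forall_norm_le.1 hU
  obtain ⟨B, hB⟩ := isBounded_iff_forall_norm_le.1 hV
  set Cb := (A + B) / |β - β'|
  have hd : 0 < |β - β'| := abs_pos.2 (sub_ne_zero.2 hββ')
  refine (((Int.finite_setOf_abs_cast_le (A + Cb * |β|)).prod
    (Int.finite_setOf_abs_cast_le Cb)).image fun q : ℤ × ℤ => (q.1 : ℝ) + q.2 * β).subset ?_
  rintro _ ⟨_, ⟨a, b, rfl, rfl⟩, hzU, hzV⟩
  have hz := hA _ hzU
  have hz' := hB _ hzV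
  rw [Real.norm_eq_abs] at hz hz'
  have hb : |(b : ℝ)| ≤ Cb := by
    rw [le_div_iff₀ hd, ← abs_mul]
    calc |(b : ℝ) * (β - β')| = |(a + b * β) - (a + b * β')| := by ring_nf
      _ ≤ A + B := (abs_sub _ _).trans (add_le_add hz hz')
  have ha : |(a : ℝ)| ≤ A + Cb * |β| :=
    calc |(a : ℝ)| = |(a + b * β) - b * β| := by ring_nf
      _ ≤ A + Cb * |β| := (abs_sub _ _).trans (add_le_add hz (by
          rw [abs_mul]; exact mul_le_mul_of_nonneg_right hb (abs_nonneg β)))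
  exact ⟨(a, b), ⟨ha, hb⟩, rfl⟩

theorem zero_mem_Xspec (β : ℝ) (m : ℕ) : (0 : ℝ) ∈ Xspec β m :=
  ⟨0, fun _ => 0, fun _ _ => Nat.zero_le m, by simp⟩

theorem add_mul_mem_Xspec {β w : ℝ} {c m : ℕ} (hc : c ≤ m) (hw : w ∈ Xspec β m) :
    (c : ℝ) + β * w ∈ Xspec β m := by
  obtain ⟨n, d, hd, rfl⟩ := hw
  refine ⟨n + 1, fun | 0 => c | j + 1 => d j, fun j hj => ?_, ?_⟩
  · cases j with
    | zero => exact hc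
    | succ j => exact hd j (by omega)
  · rw [Finset.sum_range_succ' _ (n + 1), Finset.mul_sum, add_comm]
    simp only [pow_zero, mul_one, pow_succ]
    exact congrArg (· + _) (Finset.sum_congr rfl fun j _ => by ring)

def EvenForm (β : ℝ) (m : ℕ) (S : Set ℝ) (z : ℝ) : Prop :=
  ∃ j, ∃ s ∈ S, z = m * ∑ i ∈ Finset.range j, β ^ (2 * i) + s * β ^ (2 * j)

def OddForm (β : ℝ) (m : ℕ) (S : Set ℝ) (z : ℝ) : Prop :=
  ∃ j, ∃ s ∈ S, z = m * ∑ i ∈ Finset.range j, β ^ (2 * i + 1) + s * β ^ (2 * j + 1)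

section Forms

variable {β : ℝ} {m : ℕ} {S : Set ℝ}

theorem EvenForm.of_mem {s : ℝ} (hs : s ∈ S) : EvenForm β m S s :=
  ⟨0, s, hs, by simp⟩

theorem EvenForm.oddForm_mul {w : ℝ} (hw : EvenForm β m S w) : OddForm β m S (β * w) := by
  obtain ⟨j, s, hs, rfl⟩ := hw
  refine ⟨j, s, hs, ?_⟩
  simp only [pow_succ, ← Finset.sum_mul]
  ring

theorem OddForm.evenForm_add_mul {w : ℝ} (hw : OddForm β m S w) :
    EvenForm β m S (m + β * w) := by
  obtain ⟨j, s, hs, rfl⟩ := hw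
  refine ⟨j + 1, s, hs, ?_⟩
  have h (i : ℕ) : β ^ (2 * (i + 1)) = β ^ (2 * i + 1) * β := by ring
  simp only [Finset.sum_range_succ', h, ← Finset.sum_mul]
  ring

end Forms

section QuadraticUnit

variable {β : ℝ} {p : ℤ}

theorem mul_sub_intCast_eq_one (heq : β ^ 2 = p * β + 1) : β * (β - p) = 1 := by
  linear_combination heq

theorem sub_intCast_mem_Ioo (hβ : 1 < β) (heq : β ^ 2 = p * β + 1) : β - p ∈ Ioo (0 : ℝ) 1 := by
  have h := mul_sub_intCast_eq_one heq
  constructor <;> nlinarith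

theorem floor_eq_of_sq_eq (hβ : 1 < β) (heq : β ^ 2 = p * β + 1) : ⌊β⌋ = p := by
  have h := sub_intCast_mem_Ioo hβ heq
  rw [Int.floor_eq_iff]
  constructor <;> linarith [h.1, h.2]

theorem ne_intCast_sub (hβ : 1 < β) (heq : β ^ 2 = p * β + 1) : β ≠ p - β := by
  linarith [(sub_intCast_mem_Ioo hβ heq).1]

theorem IsGaloisConj.sub_div (heq : β ^ 2 = p * β + 1) {z z' : ℝ}
    (hz : IsGaloisConj β (p - β) z z') (c : ℕ) :
    IsGaloisConj β (p - β) ((z - c) / β) (β * (c - z')) := by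
  obtain ⟨a, b, rfl, rfl⟩ := hz
  have hβ0 : β ≠ 0 := by rintro rfl; norm_num at heq
  refine ⟨b - (a - c) * p, a - c, ?_, ?_⟩
  · field_simp
    push_cast
    linear_combination ((c : ℝ) - a) * heq
  · push_cast
    linear_combination (b : ℝ) * heq

-- The digit is `⌈z' - 1/β⌉₊`, recalling `β - p = 1/β`.
theorem exists_digit (hβ : 1 < β) (heq : β ^ 2 = p * β + 1) {z' : ℝ} (hz' : -1 ≤ z') :
    ∃ c : ℕ, (c = 0 ∨ (c : ℝ) < z' - (β - p) + 1) ∧ β * (c - z') ∈ Icc (-1) β := by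
  have hu := mul_sub_intCast_eq_one heq
  have hu' := sub_intCast_mem_Ioo hβ heq
  rcases le_or_gt (z' - (β - p)) 0 with hx | hx
  · refine ⟨0, Or.inl rfl, ?_, ?_⟩ <;> push_cast <;> nlinarith
  · have h1 := Nat.le_ceil (z' - (β - p))
    have h2 := Nat.ceil_lt_add_one hx.le
    refine ⟨_, Or.inr h2, ?_, ?_⟩ <;> nlinarith

theorem natCast_le_of_isGaloisConj (hβ : 1 < β) (heq : β ^ 2 = p * β + 1) {z z' : ℝ}
    (hz : IsGaloisConj β (p - β) z z') (hz0 : 0 ≤ z) (hz' : z' ≤ β) {c : ℕ}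
    (hc : c = 0 ∨ (c : ℝ) < z' - (β - p) + 1) : (c : ℝ) ≤ z := by
  obtain rfl | hc := hc
  · simpa using hz0
  have hu := sub_intCast_mem_Ioo hβ heq
  obtain ⟨a, b, rfl, rfl⟩ := hz
  rcases lt_trichotomy b 0 with hb | rfl | hb
  · have : (b : ℝ) ≤ -1 := by exact_mod_cast Int.le_sub_one_of_lt hb
    nlinarith [hu.1]
  · have hca : (c : ℤ) ≤ a := Int.lt_add_one_iff.1 <| by
      exact_mod_cast (by push_cast at hc; linarith [hu.1] : (c : ℝ) < a + 1)
    simpa using (Int.cast_le (R := ℝ)).2 hca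
  · have : (1 : ℝ) ≤ b := by exact_mod_cast hb
    nlinarith [hu.2]

theorem sub_div_lt_self (hβ : 1 < β) {z : ℝ} (hz : 0 < z) (c : ℕ) : (z - c) / β < z := by
  rw [div_lt_iff₀ (by linarith)]
  nlinarith [Nat.cast_nonneg (α := ℝ) c]

theorem add_mul_sub_div (hβ : 1 < β) (z : ℝ) (c : ℕ) : (c : ℝ) + β * ((z - c) / β) = z := by
  rw [mul_div_cancel₀ _ (by linarith), add_sub_cancel]

theorem mem_Xspec_of_conj_mem_Icc (hβ : 1 < β) (heq : β ^ 2 = p * β + 1) {m : ℕ} (hm : p ≤ m)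
    {z z' : ℝ} (hz : IsGaloisConj β (p - β) z z') (hz0 : 0 ≤ z) (hz' : z' ∈ Icc (-1) β) :
    z ∈ Xspec β m := by
  refine Set.induction_of_finite_inter_Iic
    (S := {x | 0 ≤ x ∧ ∃ x', IsGaloisConj β (p - β) x x' ∧ x' ∈ Icc (-1) β})
    (fun A => (finite_setOf_isGaloisConj (ne_intCast_sub hβ heq) (Metric.isBounded_Icc 0 A)
      (Metric.isBounded_Icc (-1) β)).subset ?_) ?_ ⟨hz0, z', hz, hz'⟩
  · rintro x ⟨⟨hx0, x', hx, hx'⟩, hxA⟩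
    exact ⟨x', hx, ⟨hx0, hxA⟩, hx'⟩
  rintro z ⟨hz0, z', hz, hz'⟩ IH
  obtain rfl | hzpos := hz0.eq_or_lt
  · exact zero_mem_Xspec β m
  obtain ⟨c, hc, hw'⟩ := exists_digit hβ heq hz'.1
  have hcz := natCast_le_of_isGaloisConj hβ heq hz hz0 hz'.2 hc
  have hcm : c ≤ m := by
    rcases hc with rfl | hc
    · exact Nat.zero_le m
    · have : (c : ℤ) < p + 1 := by exact_mod_cast (by linarith [hz'.2] : (c : ℝ) < p + 1)
      omega
  rw [← add_mul_sub_div hβ z c]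
  refine add_mul_mem_Xspec hcm (IH _ ⟨?_, _, hz.sub_div heq c, hw'⟩ (sub_div_lt_self hβ hzpos c))
  exact div_nonneg (sub_nonneg.2 hcz) (by linarith)

theorem mem_Xspec_of_le_of_conj_mem_Icc (hβ : 1 < β) (heq : β ^ 2 = p * β + 1) {m : ℕ}
    (hm : p ≤ m) {z z' : ℝ} (hz : IsGaloisConj β (p - β) z z') (hmz : (m : ℝ) ≤ z)
    (hz' : z' ∈ Icc (-1) (m : ℝ)) : z ∈ Xspec β m := by
  obtain ⟨c, hc, hw'⟩ := exists_digit hβ heq hz'.1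
  have hcm : c ≤ m := by
    rcases hc with rfl | hc
    · exact Nat.zero_le m
    · have : (c : ℝ) < m + 1 := by linarith [hz'.2, (sub_intCast_mem_Ioo hβ heq).1]
      exact_mod_cast Nat.lt_add_one_iff.1 (by exact_mod_cast this)
  have hcz : (c : ℝ) ≤ z := (Nat.cast_le.2 hcm).trans hmz
  rw [← add_mul_sub_div hβ z c]
  exact add_mul_mem_Xspec hcm (mem_Xspec_of_conj_mem_Icc hβ heq hm (hz.sub_div heq c)
    (div_nonneg (sub_nonneg.2 hcz) (by linarith)) hw')

theorem sub_div_not_mem_Xspec (hβ : 1 < β) {m c : ℕ} (hc : c ≤ m) {z : ℝ}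
    (hz : z ∉ Xspec β m) : (z - c) / β ∉ Xspec β m :=
  fun h => hz (add_mul_sub_div hβ z c ▸ add_mul_mem_Xspec hc h)

def window (β : ℝ) (m : ℕ) : Set ℝ :=
  Ioo (-((m : ℝ) * β) / (β ^ 2 - 1)) ((m : ℝ) * β ^ 2 / (β ^ 2 - 1))

theorem isBounded_window (β : ℝ) (m : ℕ) : Bornology.IsBounded (window β m) :=
  Metric.isBounded_Ioo _ _

theorem mul_neg_mem_window (hβ : 1 < β) {m : ℕ} {z' : ℝ} (hz' : z' ∈ window β m)
    (hneg : z' < 0) : β * (0 - z') ∈ window β m := by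
  have hD : 0 < β ^ 2 - 1 := by nlinarith
  obtain ⟨h1, h2⟩ := hz'
  rw [div_lt_iff₀ hD] at h1
  constructor
  · rw [div_lt_iff₀ hD]
    have : 0 < β * (0 - z') * (β ^ 2 - 1) := by
      have : 0 < β * (0 - z') := mul_pos (by linarith) (by linarith)
      positivity
    nlinarith [Nat.cast_nonneg (α := ℝ) m]
  · rw [lt_div_iff₀ hD]; nlinarith

theorem mul_natCast_sub_mem_window (hβ : 1 < β) {m : ℕ} {z' : ℝ} (hz' : z' ∈ window β m)
    (hmz' : (m : ℝ) < z') : β * (m - z') ∈ window β m := by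
  have hD : 0 < β ^ 2 - 1 := by nlinarith
  obtain ⟨h1, h2⟩ := hz'
  rw [lt_div_iff₀ hD] at h2
  constructor
  · rw [div_lt_iff₀ hD]; nlinarith
  · rw [lt_div_iff₀ hD]
    have : β * (m - z') * (β ^ 2 - 1) < 0 :=
      mul_neg_of_neg_of_pos (mul_neg_of_pos_of_neg (by linarith) (by linarith)) hD
    nlinarith [Nat.cast_nonneg (α := ℝ) m]

def seeds (β : ℝ) (p : ℤ) (m : ℕ) : Set ℝ :=
  {s | s ∈ sigmaCP β (p - β) (window β m) ∧ 0 < s ∧ s < m}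

theorem finite_seeds (hβ : 1 < β) (heq : β ^ 2 = p * β + 1) (m : ℕ) : (seeds β p m).Finite :=
  (finite_setOf_isGaloisConj (ne_intCast_sub hβ heq) (Metric.isBounded_Icc 0 (m : ℝ))
    (isBounded_window β m)).subset fun _ ⟨hs, hs0, hsm⟩ =>
      let ⟨s', hs', hs'Ω⟩ := mem_sigmaCP_iff.1 hs
      ⟨s', hs', ⟨hs0.le, hsm.le⟩, hs'Ω⟩

theorem forms_of_not_mem_Xspec (hβ : 1 < β) (heq : β ^ 2 = p * β + 1) {m : ℕ} (hm : p ≤ m)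
    {z z' : ℝ} (hz : IsGaloisConj β (p - β) z z') (hz' : z' ∈ window β m) (hz0 : 0 < z)
    (hzX : z ∉ Xspec β m) :
    (z' < 0 → OddForm β m (seeds β p m) z) ∧ (0 ≤ z' → EvenForm β m (seeds β p m) z) := by
  refine Set.induction_of_finite_inter_Iic (P := fun z => ∀ z', IsGaloisConj β (p - β) z z' →
      z' ∈ window β m → (z' < 0 → OddForm β m (seeds β p m) z) ∧
        (0 ≤ z' → EvenForm β m (seeds β p m) z))
    (S := {x | 0 < x ∧ x ∉ Xspec β m ∧ ∃ x', IsGaloisConj β (p - β) x x' ∧ x' ∈ window β m})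
    (fun A => (finite_setOf_isGaloisConj (ne_intCast_sub hβ heq) (Metric.isBounded_Icc 0 A)
      (isBounded_window β m)).subset ?_) ?_ ⟨hz0, hzX, z', hz, hz'⟩ z' hz hz'
  · rintro x ⟨⟨hx0, -, x', hx, hx'⟩, hxA⟩
    exact ⟨x', hx, ⟨hx0.le, hxA⟩, hx'⟩
  rintro z ⟨hz0, hzX, -⟩ IH z' hz hz'
  refine ⟨fun hneg => ?_, fun hnonneg => ?_⟩
  · have hw := hz.sub_div heq 0
    have hw' := mul_neg_mem_window hβ hz' hneg
    have hwX := sub_div_not_mem_Xspec hβ (Nat.zero_le m) hzX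
    simp only [Nat.cast_zero, sub_zero] at hw hwX
    have hwEven := (IH (z / β) ⟨div_pos hz0 (by linarith), hwX, _, hw, hw'⟩
      (by simpa using sub_div_lt_self hβ hz0 0) _ hw hw').2 (by nlinarith)
    rw [← mul_div_cancel₀ z (by linarith : β ≠ 0)]
    exact hwEven.oddForm_mul
  · rcases lt_or_ge z m with hzm | hmz
    · exact EvenForm.of_mem ⟨mem_sigmaCP_iff.2 ⟨z', hz, hz'⟩, hz0, hzm⟩
    have hmz' : (m : ℝ) < z' := not_le.1 fun h =>
      hzX (mem_Xspec_of_le_of_conj_mem_Icc hβ heq hm hz hmz ⟨by linarith, h⟩)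
    have hw := hz.sub_div heq m
    have hw' := mul_natCast_sub_mem_window hβ hz' hmz'
    have hwX := sub_div_not_mem_Xspec hβ le_rfl hzX
    have hw0 : 0 < (z - m) / β := by
      refine div_pos (sub_pos.2 (hmz.lt_of_ne fun h => hzX ?_)) (by linarith)
      rw [← h]
      simpa using add_mul_mem_Xspec (β := β) le_rfl (zero_mem_Xspec β m)
    have hwOdd := (IH _ ⟨hw0, hwX, _, hw, hw'⟩ (sub_div_lt_self hβ hz0 m) _ hw hw').1
      (by nlinarith)
    rw [← add_mul_sub_div hβ z m]
    exact hwOdd.evenForm_add_mul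

end QuadraticUnit

theorem cutProject_minus_spectrum_structure_plus_general (β : ℝ) (p : ℤ)
    (hβ : 1 < β) (heq : β ^ 2 = p * β + 1)
    (m : ℕ) (hm : ⌊β⌋ < (m : ℤ)) :
    {z : ℝ | z ∈ sigmaCP β ((p : ℝ) - β)
          (Set.Ioo (-((m : ℝ) * β) / (β ^ 2 - 1)) ((m : ℝ) * β ^ 2 / (β ^ 2 - 1))) ∧
        0 < z ∧ z < (m : ℝ)}.Finite ∧
    ∀ z : ℝ, 0 < z →
      z ∈ sigmaCP β ((p : ℝ) - β)
        (Set.Ioo (-((m : ℝ) * β) / (β ^ 2 - 1)) ((m : ℝ) * β ^ 2 / (β ^ 2 - 1))) →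
      z ∉ Xspec β m →
      ∃ (j : ℕ) (s : ℝ),
        (s ∈ sigmaCP β ((p : ℝ) - β)
            (Set.Ioo (-((m : ℝ) * β) / (β ^ 2 - 1)) ((m : ℝ) * β ^ 2 / (β ^ 2 - 1))) ∧
          0 < s ∧ s < (m : ℝ)) ∧
        (z = (m : ℝ) * ∑ i ∈ Finset.range j, β ^ (2 * i) + s * β ^ (2 * j) ∨
         z = (m : ℝ) * ∑ i ∈ Finset.range j, β ^ (2 * i + 1) + s * β ^ (2 * j + 1)) := by
  have hpm : p ≤ m := (floor_eq_of_sq_eq hβ heq ▸ hm).le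
  refine ⟨finite_seeds hβ heq m, fun z hz0 hzCP hzX => ?_⟩
  obtain ⟨z', hz, hz'⟩ := mem_sigmaCP_iff.1 hzCP
  have hforms := forms_of_not_mem_Xspec hβ heq hpm hz hz' hz0 hzX
  rcases lt_or_ge z' 0 with hneg | hnonneg
  · obtain ⟨j, s, hs, rfl⟩ := hforms.1 hneg
    exact ⟨j, s, hs, Or.inr rfl⟩
  · obtain ⟨j, s, hs, rfl⟩ := hforms.2 hnonneg
    exact ⟨j, s, hs, Or.inl rfl⟩

/-- Lemma (case `β² = pβ + 1`, `p ≥ 1`, `m > ⌊β⌋`): with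
`Ω = (-mβ/(β²-1), mβ²/(β²-1))` and `𝒮 = { z ∈ Σ_β(Ω) : 0 < z < m }`, the set `𝒮` is
finite and every positive `z ∈ Σ_β(Ω) \ X^m(β)` has the form
`z = m ∑_{i<j} β^{2i} + s β^{2j}` or `z = m ∑_{i<j} β^{2i+1} + s β^{2j+1}` with `s ∈ 𝒮`. -/
theorem cutProject_minus_spectrum_structure_plus (β : ℝ) (p : ℤ)
    (hβ : 1 < β) (hp : 1 ≤ p) (heq : β ^ 2 = p * β + 1)
    (m : ℕ) (hm : ⌊β⌋ < (m : ℤ)) :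
    {z : ℝ | z ∈ sigmaCP β ((p : ℝ) - β)
          (Set.Ioo (-((m : ℝ) * β) / (β ^ 2 - 1)) ((m : ℝ) * β ^ 2 / (β ^ 2 - 1))) ∧
        0 < z ∧ z < (m : ℝ)}.Finite ∧
    ∀ z : ℝ, 0 < z →
      z ∈ sigmaCP β ((p : ℝ) - β)
        (Set.Ioo (-((m : ℝ) * β) / (β ^ 2 - 1)) ((m : ℝ) * β ^ 2 / (β ^ 2 - 1))) →
      z ∉ Xspec β m →
      ∃ (j : ℕ) (s : ℝ),
        (s ∈ sigmaCP β ((p : ℝ) - β)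
            (Set.Ioo (-((m : ℝ) * β) / (β ^ 2 - 1)) ((m : ℝ) * β ^ 2 / (β ^ 2 - 1))) ∧
          0 < s ∧ s < (m : ℝ)) ∧
        (z = (m : ℝ) * ∑ i ∈ Finset.range j, β ^ (2 * i) + s * β ^ (2 * j) ∨
         z = (m : ℝ) * ∑ i ∈ Finset.range j, β ^ (2 * i + 1) + s * β ^ (2 * j + 1)) :=
  cutProject_minus_spectrum_structure_plus_general β p hβ heq m hm
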